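/- Let n, m, ℓ be nonnegative integers. Then 2F1(-ℓ, -n-ℓ; -m-n-2ℓ; z) = ((m+ℓ)!(n+m+ℓ)!/(m!(n+m+2ℓ)!)) · 2F1(-ℓ, -n-ℓ; m+1; 1-z), as polynomials in z. -/

import Mathlib

open Finset

noncomputable def poch (x : ℂ) (k : ℕ) : ℂ := (ascPochhammer ℂ k).eval x

/-- Terminating Gauss hypergeometric series `2F1(-n, b; c; z)` as a finite sum. -/
noncomputable def hyp (n : ℕ) (b c : ℂ) (z : ℂ) : ℂ :=
  ∑ k ∈ Finset.range (n + 1),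
    poch (-(n : ℂ)) k * poch b k / (poch c k * (Nat.factorial k : ℂ)) * z ^ k

/-!
With all parameters nonpositive integers except `m + 1`, both series are sums of binomial
ratios. Expanding `(1 - z) ^ k` binomially reduces the identity to one between the coefficients
of `(-z) ^ j`. The rewriting `C(n+l,k) / C(m+k,k) = C(n+m+l,m+k) / C(n+m+l,m)` turns the
right-hand coefficient into the Vandermonde convolution
`∑ₖ C(l,k) C(k,j) C(n+m+l,m+k) = C(l,j) C(n+m+2l-j,m+l)`, the prefactor equals
`C(n+m+l,m) / C(n+m+2l,m+l)`, and what is left is the trinomial revision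
`C(M-j,m+l) / C(M,m+l) = C(n+l,j) / C(M,j)` with `M = n+m+2l`.
-/

open Nat

theorem sum_range_choose_mul_choose_add (L N t : ℕ) :
    ∑ i ∈ range (L + 1), L.choose i * N.choose (t + i) = (L + N).choose (t + L) := by
  rw [add_choose_eq, sum_antidiagonal_eq_sum_range_succ_mk,
    ← sum_subset (range_subset_range.mpr (by omega : L + 1 ≤ t + L + 1)), ← sum_range_reflect]
  · refine sum_congr rfl fun i hi => ?_
    have hi := mem_range_succ_iff.mp hi
    rw [add_tsub_cancel_right, choose_symm hi, show t + (L - i) = t + L - i by omega]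
  · intro a _ ha
    rw [choose_eq_zero_of_lt (by simpa using ha), zero_mul]

theorem sum_range_choose_mul_choose_mul_choose_add (j L N t : ℕ) :
    ∑ k ∈ range (j + L + 1), (j + L).choose k * k.choose j * N.choose (t + k) =
      (j + L).choose j * (L + N).choose (t + j + L) := by
  rw [add_assoc j, sum_range_add, sum_eq_zero fun k hk => by
    rw [choose_eq_zero_of_lt (mem_range.mp hk), mul_zero, zero_mul], zero_add,
    ← sum_range_choose_mul_choose_add, mul_sum]
  refine sum_congr rfl fun i _ => ?_
  rw [choose_mul (Nat.le_add_right j i), add_tsub_cancel_left, add_tsub_cancel_left, add_assoc t,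
    mul_assoc]

theorem sum_range_mul_one_sub_pow {R : Type*} [CommRing R] (a : ℕ → R) (l : ℕ) (z : R) :
    ∑ k ∈ range (l + 1), a k * (1 - z) ^ k =
      ∑ j ∈ range (l + 1), (∑ k ∈ range (l + 1), a k * k.choose j) * (-z) ^ j := by
  simp_rw [sum_mul, mul_assoc]
  rw [sum_comm]
  refine sum_congr rfl fun k hk => ?_
  rw [← mul_sum, sub_eq_add_neg, add_comm, add_pow,
    sum_subset (range_subset_range.mpr (mem_range.mp hk))]
  · exact congrArg _ (sum_congr rfl fun j _ => by rw [one_pow, mul_one, mul_comm])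
  · intro j _ hj
    rw [choose_eq_zero_of_lt (by simpa using hj), cast_zero, mul_zero]

section CharZeroField

variable {K : Type*} [Field K] [CharZero K]

theorem cast_choose_div_cast_choose_add (p m k : ℕ) :
    (p.choose k : K) / (m + k).choose k = (p + m).choose (m + k) / (p + m).choose m := by
  have h := choose_mul (n := p + m) (k := m + k) (s := m) (Nat.le_add_right m k)
  rw [add_tsub_cancel_left, add_tsub_cancel_right, choose_symm_add] at h
  rw [div_eq_div_iff (by exact_mod_cast (choose_pos (by omega)).ne')
    (by exact_mod_cast (choose_pos (by omega)).ne')]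
  norm_cast
  linarith

theorem cast_choose_div_cast_choose_add_add (j r a : ℕ) :
    ((r + a).choose a : K) / (j + r + a).choose a = (j + r).choose j / (j + r + a).choose j := by
  have h := choose_mul (n := j + r + a) (k := j + r) (s := j) (Nat.le_add_right j r)
  rw [add_assoc j, add_tsub_cancel_left, add_tsub_cancel_left, ← add_assoc,
    choose_symm_add (a := j + r), choose_symm_add (a := r)] at h
  rw [div_eq_div_iff (by exact_mod_cast (choose_pos (by omega)).ne')
    (by exact_mod_cast (choose_pos (by omega)).ne')]
  norm_cast
  linarith

theorem factorial_ratio_eq_choose_div_choose (a b c : ℕ) :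
    ((a + c)! * (a + b)! / (a ! * (a + b + c)!) : K) =
      (a + b).choose a / (a + b + c).choose (a + c) := by
  have : (b ! : K) ≠ 0 := by exact_mod_cast b.factorial_ne_zero
  rw [cast_add_choose, add_right_comm, cast_add_choose, add_right_comm]
  field_simp

theorem factorial_ratio_mul_sum_choose_eq (n m l j : ℕ) (hj : j ≤ l) :
    ((m + l)! * (n + m + l)! / (m ! * (n + m + 2 * l)!) : K) *
        ∑ k ∈ range (l + 1), (l.choose k * (n + l).choose k / (m + k).choose k : K) * k.choose j =
      l.choose j * (n + l).choose j / (m + n + 2 * l).choose j := by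
  obtain ⟨L, rfl⟩ := exists_add_of_le hj
  have hterm (k : ℕ) : ((j + L).choose k * (n + (j + L)).choose k / (m + k).choose k : K) *
      k.choose j = ((j + L).choose k * k.choose j * (n + (j + L) + m).choose (m + k) : ℕ) /
        (n + (j + L) + m).choose m := by
    rw [mul_div_assoc, cast_choose_div_cast_choose_add]
    push_cast
    ring
  have hN : ((n + (j + L) + m).choose m : K) ≠ 0 := by exact_mod_cast (choose_pos (by omega)).ne'
  have hratio : ((L + (n + (j + L) + m)).choose (m + j + L) : K) /
      (n + (j + L) + m + (j + L)).choose (m + (j + L)) =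
        (n + (j + L)).choose j / (m + n + 2 * (j + L)).choose j := by
    convert cast_choose_div_cast_choose_add_add (K := K) j (n + L) (m + j + L) using 4 <;> ring
  rw [sum_congr rfl fun k _ => hterm k, ← sum_div, ← Nat.cast_sum,
    sum_range_choose_mul_choose_mul_choose_add,
    show n + m + (j + L) = m + (n + (j + L)) by ring,
    show n + m + 2 * (j + L) = m + (n + (j + L)) + (j + L) by ring,
    factorial_ratio_eq_choose_div_choose, add_comm m (n + (j + L)), Nat.cast_mul]
  conv_rhs => rw [mul_div_assoc, ← hratio]
  field_simp

end CharZeroField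

theorem poch_neg_natCast (a k : ℕ) : poch (-(a : ℂ)) k = (-1) ^ k * k ! * a.choose k := by
  rw [poch, ascPochhammer_eval_neg_eq_descPochhammer, descPochhammer_eval_eq_descFactorial,
    descFactorial_eq_factorial_mul_choose]
  push_cast
  ring

theorem poch_natCast_add_one (m k : ℕ) : poch ((m : ℂ) + 1) k = k ! * (m + k).choose k := by
  rw [poch, ← cast_succ, ascPochhammer_nat_eq_natCast_ascFactorial,
    ascFactorial_eq_factorial_mul_choose, cast_mul]

-- For `j > c` both `poch (-c) j` and `c.choose j` vanish, so division by zero makes those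
-- terms `0` on both sides.
theorem hyp_neg_natCast_neg_natCast (l b c : ℕ) (z : ℂ) :
    hyp l (-(b : ℂ)) (-(c : ℂ)) z =
      ∑ j ∈ range (l + 1), (l.choose j * b.choose j / c.choose j : ℂ) * (-z) ^ j := by
  refine sum_congr rfl fun j _ => ?_
  have : (j ! : ℂ) ≠ 0 := by exact_mod_cast j.factorial_ne_zero
  rw [poch_neg_natCast, poch_neg_natCast, poch_neg_natCast, neg_pow]
  field_simp
  ring

theorem hyp_neg_natCast_natCast_add_one (l b m : ℕ) (z : ℂ) :
    hyp l (-(b : ℂ)) ((m : ℂ) + 1) z =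
      ∑ k ∈ range (l + 1), (l.choose k * b.choose k / (m + k).choose k : ℂ) * z ^ k := by
  refine sum_congr rfl fun k _ => ?_
  have : (k ! : ℂ) ≠ 0 := by exact_mod_cast k.factorial_ne_zero
  rw [poch_neg_natCast, poch_neg_natCast, poch_natCast_add_one]
  field_simp
  rw [← pow_mul, Even.neg_one_pow ⟨k, by ring⟩, one_mul]

theorem additive_case_transform_at_one (n m l : ℕ) (z : ℂ) :
    hyp l (-(n : ℂ) - l) (-(m : ℂ) - n - 2 * l) z =
      (Nat.factorial (m + l) : ℂ) * (Nat.factorial (n + m + l) : ℂ) /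
          ((Nat.factorial m : ℂ) * (Nat.factorial (n + m + 2 * l) : ℂ)) *
        hyp l (-(n : ℂ) - l) ((m : ℂ) + 1) (1 - z) := by
  have hb : -(n : ℂ) - l = -((n + l : ℕ) : ℂ) := by push_cast; ring
  have hc : -(m : ℂ) - n - 2 * l = -((m + n + 2 * l : ℕ) : ℂ) := by push_cast; ring
  rw [hb, hc, hyp_neg_natCast_neg_natCast, hyp_neg_natCast_natCast_add_one,
    sum_range_mul_one_sub_pow, mul_sum]
  refine sum_congr rfl fun j hj => ?_
  rw [← mul_assoc, factorial_ratio_mul_sum_choose_eq n m l j (mem_range_succ_iff.mp hj)]
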